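/- arXiv:1103.0616 — 4 statements merged into one kernel-verified Lean document; each statement's English description precedes it below -/
import Mathlib

section
/- Let 0 < p < s ≤ ∞ and -n(1-p/s) < α ≤ 0. Then every function f in the block space BL^{p,s}_{|x|^α}(ℝⁿ) belongs to the weighted Lebesgue space L^p(|x|^α dx), and ‖f‖_{L^p_{|x|^α}} ≤ C ‖f‖_{BL^{p,s}_{|x|^α}}. -/
/-!
A block `a` supported in `B = B(x₀, r)` has, by Hölder's inequality with `1 / q = 1 - p / s`,
`∫ |a|^p |x|^α ≤ ‖a‖_{L^s}^p ‖|x|^α‖_{L^q(B)}`. The layer cake formula bounds the second factor by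
a multiple of `r^(n/q + α)` as soon as `α q > -n`, which is the hypothesis on `α`, and the block
normalisation makes the powers of `r` cancel: blocks are uniformly bounded in `L^p(|x|^α)`.
Since the `min p 1`-th power of the `L^p` quasinorm is countably subadditive, this passes to
`f = Σ λ_k a_k`, and taking the infimum over all decompositions gives the bound by the block norm.
-/

open MeasureTheory Metric ENNReal Filter
open scoped ENNReal NNReal

noncomputable section

abbrev Rn (n : ℕ) := EuclideanSpace ℝ (Fin n)

/-- A `(p,s,α)`-block: supported in a closed ball `B(x₀,r)` with
`‖a‖_{L^s} ≤ |B|^{-α/(pn)-1/p+1/s}` (with `1/s = 0` when `s = ∞`). -/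
def IsBlock (n : ℕ) (p : ℝ) (s : ℝ≥0∞) (α : ℝ) (a : Rn n → ℝ) : Prop :=
  Measurable a ∧
  ∃ x₀ : Rn n, ∃ r : ℝ, 0 < r ∧ (∀ x, x ∉ closedBall x₀ r → a x = 0) ∧
    eLpNorm a s volume ≤
      ENNReal.ofReal ((volume (closedBall x₀ r)).toReal ^ (-α / (p * n) - 1 / p + s.toReal⁻¹))

/-- A decomposition `f = Σ l k • a k` (a.e. convergence) into `(p,s,α)`-blocks with
`Σ |l k| ^ min p 1 < ∞`. -/
def IsBLDecomp (n : ℕ) (p : ℝ) (s : ℝ≥0∞) (α : ℝ)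
    (f : Rn n → ℝ) (l : ℕ → ℝ) (a : ℕ → Rn n → ℝ) : Prop :=
  (∀ k, IsBlock n p s α (a k)) ∧ Summable (fun k => |l k| ^ min p 1) ∧
  (∀ᵐ x : Rn n ∂volume, HasSum (fun k => l k * a k x) (f x))

/-- Membership in the block space `BL^{p,s}_{|x|^α}`. -/
def MemBL (n : ℕ) (p : ℝ) (s : ℝ≥0∞) (α : ℝ) (f : Rn n → ℝ) : Prop :=
  ∃ l a, IsBLDecomp n p s α f l a

/-- The quasinorm of `BL^{p,s}_{|x|^α}`:
`inf (Σ |l k| ^ min p 1)^(1/min p 1)` over all block decompositions. -/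
def BLnorm (n : ℕ) (p : ℝ) (s : ℝ≥0∞) (α : ℝ) (f : Rn n → ℝ) : ℝ :=
  sInf { c | ∃ l a, IsBLDecomp n p s α f l a ∧
    c = (∑' k, |l k| ^ min p 1) ^ (min p 1)⁻¹ }

theorem ENNReal.rpow_tsum_le_tsum_rpow {ι : Type*} {p : ℝ} (hp₀ : 0 < p) (hp₁ : p ≤ 1)
    (f : ι → ℝ≥0∞) : (∑' i, f i) ^ p ≤ ∑' i, f i ^ p :=
  le_of_tendsto' ((ENNReal.continuous_rpow_const.tendsto _).comp ENNReal.summable.hasSum)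
    fun s => (Finset.le_sum_of_subadditive (· ^ p) (ENNReal.zero_rpow_of_pos hp₀).le
      (fun x y => ENNReal.rpow_add_le_add_rpow x y hp₀.le hp₁) s f).trans (ENNReal.sum_le_tsum s)

section SeriesInLp

variable {X E ι : Type*} [MeasurableSpace X] {μ : Measure X} [NormedAddCommGroup E] [Countable ι]
  {g : ι → X → E} {f : X → E}

theorem eLpNorm_rpow_le_tsum_of_hasSum {p : ℝ} (hp₀ : 0 < p) (hp₁ : p ≤ 1)
    (hg : ∀ i, AEStronglyMeasurable (g i) μ) (hf : ∀ᵐ x ∂μ, HasSum (g · x) (f x)) :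
    eLpNorm f (ENNReal.ofReal p) μ ^ p ≤ ∑' i, eLpNorm (g i) (ENNReal.ofReal p) μ ^ p := by
  have hp : (ENNReal.ofReal p).toReal = p := ENNReal.toReal_ofReal hp₀.le
  simp_rw [eLpNorm_eq_eLpNorm' (by simpa using hp₀) ENNReal.ofReal_ne_top, hp,
    ← lintegral_rpow_enorm_eq_rpow_eLpNorm' hp₀]
  calc ∫⁻ x, ‖f x‖ₑ ^ p ∂μ ≤ ∫⁻ x, ∑' i, ‖g i x‖ₑ ^ p ∂μ := by
        refine lintegral_mono_ae (hf.mono fun x hx => ?_)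
        rw [← hx.tsum_eq]
        exact (ENNReal.rpow_le_rpow enorm_tsum_le_tsum_enorm hp₀.le).trans
          (ENNReal.rpow_tsum_le_tsum_rpow hp₀ hp₁ _)
    _ = ∑' i, ∫⁻ x, ‖g i x‖ₑ ^ p ∂μ := lintegral_tsum fun i => (hg i).enorm.pow_const p

theorem eLpNorm_le_tsum_of_hasSum {p : ℝ≥0∞} (hp : 1 ≤ p)
    (hg : ∀ i, AEStronglyMeasurable (g i) μ) (hf : ∀ᵐ x ∂μ, HasSum (g · x) (f x)) :
    eLpNorm f p μ ≤ ∑' i, eLpNorm (g i) p μ :=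
  Lp.eLpNorm_le_of_ae_tendsto (u := atTop) (f := fun s : Finset ι => ∑ i ∈ s, g i)
    (Eventually.of_forall fun s =>
      (eLpNorm_sum_le (fun i _ => hg i) hp).trans (ENNReal.sum_le_tsum s))
    (fun s => Finset.aestronglyMeasurable_sum s fun i _ => hg i)
    (hf.mono fun x hx => by simp only [Finset.sum_apply]; exact hx)

theorem eLpNorm_rpow_min_one_le_tsum_of_hasSum {p : ℝ} (hp : 0 < p)
    (hg : ∀ i, AEStronglyMeasurable (g i) μ) (hf : ∀ᵐ x ∂μ, HasSum (g · x) (f x)) :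
    eLpNorm f (ENNReal.ofReal p) μ ^ min p 1
      ≤ ∑' i, eLpNorm (g i) (ENNReal.ofReal p) μ ^ min p 1 := by
  rcases le_total p 1 with hp₁ | hp₁
  · simpa only [min_eq_left hp₁] using eLpNorm_rpow_le_tsum_of_hasSum hp hp₁ hg hf
  · simpa only [min_eq_right hp₁, ENNReal.rpow_one] using
      eLpNorm_le_tsum_of_hasSum (ENNReal.one_le_ofReal.2 hp₁) hg hf

end SeriesInLp

section WeightOnBalls

open Module Set

variable {E : Type*} [NormedAddCommGroup E] [NormedSpace ℝ E] [FiniteDimensional ℝ E]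
  [MeasurableSpace E] [BorelSpace E] (μ : Measure E) [μ.IsAddHaarMeasure]

theorem measure_le_norm_rpow_le {γ t : ℝ} (hγ : γ < 0) (ht : 0 < t) :
    μ {x | t ≤ ‖x‖ ^ γ} ≤ ENNReal.ofReal (t ^ (finrank ℝ E / γ)) * μ (ball 0 1) := by
  have hsub : {x : E | t ≤ ‖x‖ ^ γ} ⊆ closedBall 0 (t ^ γ⁻¹) := by
    intro x (hx : t ≤ ‖x‖ ^ γ)
    have hx0 : 0 < ‖x‖ := by
      by_contra! h
      rw [show ‖x‖ = 0 from le_antisymm h (norm_nonneg x), Real.zero_rpow hγ.ne] at hx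
      exact (ht.trans_le hx).false
    rw [mem_closedBall_zero_iff]
    simpa [← Real.rpow_mul hx0.le, mul_inv_cancel₀ hγ.ne] using
      Real.rpow_le_rpow_of_nonpos ht hx (inv_nonpos.2 hγ.le)
  calc μ {x | t ≤ ‖x‖ ^ γ} ≤ μ (closedBall 0 (t ^ γ⁻¹)) := measure_mono hsub
    _ = _ := by
      rw [Measure.addHaar_closedBall _ _ (by positivity), ← Real.rpow_natCast,
        ← Real.rpow_mul ht.le, inv_mul_eq_div]

/-- Layer cake: the superlevel sets of `‖x‖ ^ γ` in `closedBall x₀ r` have measure at most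
`μ (closedBall x₀ r)` below the level `r ^ γ`, and at most a multiple of `t ^ (d / γ)`, which is
integrable at infinity since `γ > -d`, above it. -/
theorem exists_setLIntegral_closedBall_norm_rpow_le {γ : ℝ}
    (hγ : -(finrank ℝ E : ℝ) < γ) (hγ0 : γ ≤ 0) :
    ∃ K : ℝ≥0∞, K ≠ ∞ ∧ ∀ (x₀ : E) (r : ℝ), 0 < r →
      ∫⁻ x in closedBall x₀ r, ENNReal.ofReal (‖x‖ ^ γ) ∂μ
        ≤ K * ENNReal.ofReal (r ^ (finrank ℝ E + γ)) := by
  set d : ℝ := (finrank ℝ E : ℝ)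
  rcases hγ0.eq_or_lt with rfl | hγneg
  · refine ⟨μ (ball 0 1), measure_ball_lt_top.ne, fun x₀ r hr => ?_⟩
    simp [Measure.addHaar_closedBall _ _ hr.le, mul_comm, d]
  set κ : ℝ := d / γ
  have hκ : κ < -1 := by
    rw [div_lt_iff_of_neg hγneg]; linarith
  refine ⟨μ (ball 0 1) * (1 + ENNReal.ofReal (-(κ + 1))⁻¹), by finiteness, fun x₀ r hr => ?_⟩
  set T : ℝ := r ^ γ
  have hT : 0 < T := by positivity
  set ν := μ.restrict (closedBall x₀ r)
  have hνT : ν univ * ENNReal.ofReal T = μ (ball 0 1) * ENNReal.ofReal (r ^ (d + γ)) := by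
    rw [Measure.restrict_apply_univ, Measure.addHaar_closedBall _ _ hr.le, ← Real.rpow_natCast,
      mul_comm (ENNReal.ofReal _), mul_assoc, ← ENNReal.ofReal_mul (by positivity),
      ← Real.rpow_add hr]
  have htail : ∫⁻ t in Ioi T, ENNReal.ofReal (t ^ κ)
      = ENNReal.ofReal (-(κ + 1))⁻¹ * ENNReal.ofReal (r ^ (d + γ)) := by
    rw [← ofReal_integral_eq_lintegral_ofReal (integrableOn_Ioi_rpow_of_lt hκ hT)
      (ae_restrict_of_forall_mem measurableSet_Ioi fun t ht => by
        exact Real.rpow_nonneg (hT.trans ht).le κ),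
      integral_Ioi_rpow_of_lt hκ hT, ← ENNReal.ofReal_mul (inv_nonneg.2 (by linarith))]
    have hTq : T ^ (κ + 1) = r ^ (d + γ) := by
      rw [← Real.rpow_mul hr.le]
      congr 1
      simp only [κ, mul_add, mul_div_cancel₀ _ hγneg.ne, mul_one, add_comm]
    rw [hTq, neg_div, ← div_neg, div_eq_inv_mul]
  calc ∫⁻ x, ENNReal.ofReal (‖x‖ ^ γ) ∂ν
      = ∫⁻ t in Ioi 0, ν {x | t ≤ ‖x‖ ^ γ} :=
        lintegral_eq_lintegral_meas_le ν (ae_of_all _ fun x => by positivity) (by fun_prop)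
    _ ≤ (∫⁻ t in Ioc 0 T, ν {x | t ≤ ‖x‖ ^ γ}) + ∫⁻ t in Ioi T, ν {x | t ≤ ‖x‖ ^ γ} :=
        (lintegral_mono_set Ioi_subset_Ioc_union_Ioi).trans (lintegral_union_le _ _ _)
    _ ≤ (∫⁻ _ in Ioc 0 T, ν univ) + ∫⁻ t in Ioi T, ENNReal.ofReal (t ^ κ) * μ (ball 0 1) := by
        refine add_le_add (lintegral_mono fun t => measure_mono (subset_univ _))
          (setLIntegral_mono' measurableSet_Ioi fun t ht => ?_)
        exact (Measure.restrict_apply_le _ _).trans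
          (measure_le_norm_rpow_le μ hγneg (hT.trans ht))
    _ = _ := by
        rw [lintegral_mul_const _ (by fun_prop), htail, setLIntegral_const, Real.volume_Ioc,
          sub_zero, hνT]
        ring

theorem exists_eLpNorm_norm_rpow_restrict_closedBall_le {α q : ℝ} (hq : 0 < q)
    (hαq : -(finrank ℝ E : ℝ) < α * q) (hα : α ≤ 0) :
    ∃ K : ℝ≥0∞, K ≠ ∞ ∧ ∀ (x₀ : E) (r : ℝ), 0 < r →
      eLpNorm (fun x => ‖x‖ ^ α) (ENNReal.ofReal q) (μ.restrict (closedBall x₀ r))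
        ≤ K * ENNReal.ofReal (r ^ (finrank ℝ E / q + α)) := by
  obtain ⟨K, hK, hball⟩ :=
    exists_setLIntegral_closedBall_norm_rpow_le μ hαq (mul_nonpos_of_nonpos_of_nonneg hα hq.le)
  refine ⟨K ^ q⁻¹, by finiteness, fun x₀ r hr => ?_⟩
  have hpow (x : E) : ‖‖x‖ ^ α‖ₑ ^ q = ENNReal.ofReal (‖x‖ ^ (α * q)) := by
    rw [Real.enorm_of_nonneg (by positivity), ENNReal.ofReal_rpow_of_nonneg (by positivity) hq.le,
      Real.rpow_mul (norm_nonneg x)]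
  rw [eLpNorm_eq_lintegral_rpow_enorm_toReal (by simpa using hq) ENNReal.ofReal_ne_top,
    ENNReal.toReal_ofReal hq.le]
  simp_rw [hpow]
  calc (∫⁻ x in closedBall x₀ r, ENNReal.ofReal (‖x‖ ^ (α * q)) ∂μ) ^ (1 / q)
      ≤ (K * ENNReal.ofReal (r ^ (finrank ℝ E + α * q))) ^ (1 / q) := by
        gcongr; exact hball x₀ r hr
    _ = _ := by
        rw [ENNReal.mul_rpow_of_nonneg _ _ (by positivity), one_div,
          ENNReal.ofReal_rpow_of_nonneg (by positivity) (by positivity), ← Real.rpow_mul hr.le]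
        congr 3
        field_simp

end WeightOnBalls

theorem mul_toReal_inv_lt_one {p : ℝ} {s : ℝ≥0∞} (hp : 0 ≤ p) (hps : ENNReal.ofReal p < s) :
    p * s.toReal⁻¹ < 1 := by
  rcases eq_or_ne s ∞ with rfl | hs
  · simp
  · have h := (ENNReal.ofReal_lt_iff_lt_toReal hp hs).1 hps
    rwa [← div_eq_mul_inv, div_lt_one (hp.trans_lt h)]

/-- The exponents `q, s / p` with `1 / q = 1 - p / s`; for `s = ∞` this is `(1, ∞)`, through the
convention `(∞ : ℝ≥0∞).toReal⁻¹ = 0`. -/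
theorem holderConjugate_ofReal_inv_one_sub_mul {p : ℝ} {s : ℝ≥0∞} (hp : 0 < p)
    (hps : ENNReal.ofReal p < s) :
    ENNReal.HolderConjugate (ENNReal.ofReal (1 - p * s.toReal⁻¹)⁻¹) (s / ENNReal.ofReal p) := by
  have hθ := mul_toReal_inv_lt_one hp.le hps
  have hθ0 : 0 ≤ p * s.toReal⁻¹ := by positivity
  have hdiv : ENNReal.ofReal p / s = ENNReal.ofReal (p * s.toReal⁻¹) := by
    rcases eq_or_ne s ∞ with rfl | hs
    · simp
    · have hs0 : 0 < s.toReal := ENNReal.toReal_pos (hps.trans_le' zero_le).ne' hs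
      rw [← div_eq_mul_inv, ENNReal.ofReal_div_of_pos hs0, ENNReal.ofReal_toReal hs]
  rw [ENNReal.holderConjugate_iff, ← ENNReal.ofReal_inv_of_pos (by simpa using hθ), inv_inv,
    ENNReal.inv_div (Or.inl ENNReal.ofReal_ne_top) (Or.inl (by simpa using hp)), hdiv,
    ← ENNReal.ofReal_add (by linarith) hθ0, sub_add_cancel, ENNReal.ofReal_one]

/-- The measure `|x|^α dx`, so that `L^p_{|x|^α} = L^p (weightedVolume n α)`. -/
def weightedVolume (n : ℕ) (α : ℝ) : Measure (Rn n) :=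
  volume.withDensity fun x => ENNReal.ofReal (‖x‖ ^ α)

theorem eLpNorm_weightedVolume {n : ℕ} {p α : ℝ} (hp : 0 < p) (f : Rn n → ℝ) :
    eLpNorm f (ENNReal.ofReal p) (weightedVolume n α)
      = (∫⁻ x, (‖f x‖₊ : ℝ≥0∞) ^ p * ENNReal.ofReal (‖x‖ ^ α)) ^ (1 / p) := by
  rw [eLpNorm_eq_lintegral_rpow_enorm_toReal (by simpa using hp) ENNReal.ofReal_ne_top,
    ENNReal.toReal_ofReal hp.le, weightedVolume,
    lintegral_withDensity_eq_lintegral_mul_non_measurable _ (by fun_prop)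
      (ae_of_all _ fun _ => ENNReal.ofReal_lt_top)]
  simp_rw [Pi.mul_apply, mul_comm (ENNReal.ofReal _), enorm_eq_nnnorm]

theorem IsBlock.lintegral_weighted_le {n : ℕ} {p : ℝ} {s : ℝ≥0∞} {α : ℝ} {a : Rn n → ℝ}
    (ha : IsBlock n p s α a) (hn : 0 < n) (hp : 0 < p) (hps : ENNReal.ofReal p < s) {K : ℝ≥0∞}
    (hK : ∀ (x₀ : Rn n) (r : ℝ), 0 < r →
      eLpNorm (fun x => ‖x‖ ^ α) (ENNReal.ofReal (1 - p * s.toReal⁻¹)⁻¹)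
          (volume.restrict (closedBall x₀ r))
        ≤ K * ENNReal.ofReal (r ^ (n * (1 - p * s.toReal⁻¹) + α))) :
    ∫⁻ x, (‖a x‖₊ : ℝ≥0∞) ^ p * ENNReal.ofReal (‖x‖ ^ α)
      ≤ K * ENNReal.ofReal ((volume (ball (0 : Rn n) 1)).toReal
          ^ (-α / n - 1 + p * s.toReal⁻¹)) := by
  obtain ⟨ha_meas, x₀, r, hr, hsupp, hnorm⟩ := ha
  set θ := p * s.toReal⁻¹
  have := holderConjugate_ofReal_inv_one_sub_mul hp hps
  set B := closedBall x₀ r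
  have hB : volume B = ENNReal.ofReal (r ^ (n : ℝ)) * volume (ball (0 : Rn n) 1) := by
    rw [Measure.addHaar_closedBall _ _ hr.le, finrank_euclideanSpace_fin, Real.rpow_natCast]
  have hrestrict : ∫⁻ x, (‖a x‖₊ : ℝ≥0∞) ^ p * ENNReal.ofReal (‖x‖ ^ α)
      = eLpNorm ((fun x : Rn n => ‖x‖ ^ α) • fun x => ‖a x‖ ^ p) 1 (volume.restrict B) := by
    rw [eLpNorm_one_eq_lintegral_enorm, ← setLIntegral_eq_of_support_subset (s := B)]
    · congr 1 with x
      rw [Pi.smul_apply', smul_eq_mul, enorm_mul, Real.enorm_of_nonneg (by positivity), mul_comm,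
        Real.enorm_rpow_of_nonneg (norm_nonneg _) hp.le, enorm_norm, enorm_eq_nnnorm]
    · intro x hx
      by_contra hxB
      simp [hsupp x hxB, ENNReal.zero_rpow_of_pos hp] at hx
  have hblock : eLpNorm (fun x => ‖a x‖ ^ p) (s / ENNReal.ofReal p) (volume.restrict B)
      ≤ ENNReal.ofReal ((volume B).toReal ^ (-α / (p * n) - 1 / p + s.toReal⁻¹)) ^ p := by
    rw [eLpNorm_norm_rpow _ hp, ENNReal.div_mul_cancel (by simpa using hp) ENNReal.ofReal_ne_top]
    gcongr
    exact (eLpNorm_restrict_le _ _ _ _).trans hnorm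
  rw [hrestrict]
  calc eLpNorm ((fun x : Rn n => ‖x‖ ^ α) • fun x => ‖a x‖ ^ p) 1 (volume.restrict B)
      ≤ eLpNorm (fun x => ‖x‖ ^ α) (ENNReal.ofReal (1 - θ)⁻¹) (volume.restrict B)
          * eLpNorm (fun x => ‖a x‖ ^ p) (s / ENNReal.ofReal p) (volume.restrict B) :=
        eLpNorm_smul_le_mul_eLpNorm (ha_meas.norm.pow_const p).aestronglyMeasurable
          (measurable_norm.pow_const α).aestronglyMeasurable
    _ ≤ K * ENNReal.ofReal (r ^ (n * (1 - θ) + α))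
          * ENNReal.ofReal ((volume B).toReal ^ (-α / (p * n) - 1 / p + s.toReal⁻¹)) ^ p :=
        mul_le_mul' (hK x₀ r hr) hblock
    _ = _ := by
        have hv : (volume B).toReal = r ^ (n : ℝ) * (volume (ball (0 : Rn n) 1)).toReal := by
          rw [hB, ENNReal.toReal_mul, ENNReal.toReal_ofReal (by positivity)]
        have hn' : (n : ℝ) ≠ 0 := by positivity
        have hexp : (-α / (p * n) - 1 / p + s.toReal⁻¹) * p = -α / n - 1 + θ := by
          field_simp
          ring
        have hcancel : n * (1 - θ) + α + n * (-α / n - 1 + θ) = 0 := by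
          field_simp
          ring
        rw [mul_assoc, ENNReal.ofReal_rpow_of_nonneg (by positivity) hp.le,
          ← ENNReal.ofReal_mul (by positivity), ← Real.rpow_mul (by positivity), hexp, hv,
          Real.mul_rpow (by positivity) (by positivity), ← mul_assoc, ← Real.rpow_mul hr.le,
          ← Real.rpow_add hr, hcancel, Real.rpow_zero, one_mul]

theorem exists_eLpNorm_weightedVolume_le_of_isBlock {n : ℕ} {p : ℝ} {s : ℝ≥0∞} {α : ℝ}
    (hp : 0 < p) (hps : ENNReal.ofReal p < s)
    (hα₁ : -(n : ℝ) * (1 - p * s.toReal⁻¹) < α) (hα₂ : α ≤ 0) :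
    ∃ C : ℝ, 0 < C ∧ ∀ a : Rn n → ℝ, IsBlock n p s α a →
      eLpNorm a (ENNReal.ofReal p) (weightedVolume n α) ≤ ENNReal.ofReal C := by
  have hθ := mul_toReal_inv_lt_one hp.le hps
  have hn : 0 < n := Nat.pos_of_ne_zero fun h => by subst h; simp at hα₁; linarith
  have hq : 0 < (1 - p * s.toReal⁻¹)⁻¹ := by simpa using hθ
  obtain ⟨K, hK, hweight⟩ := exists_eLpNorm_norm_rpow_restrict_closedBall_le
    (volume : Measure (Rn n)) hq
    (by rwa [finrank_euclideanSpace_fin, ← div_eq_mul_inv, lt_div_iff₀ (by linarith)]) hα₂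
  set M := K * ENNReal.ofReal
    ((volume (ball (0 : Rn n) 1)).toReal ^ (-α / n - 1 + p * s.toReal⁻¹))
  obtain ⟨N, hN⟩ := ENNReal.exists_nat_gt (r := M ^ (1 / p)) (by finiteness)
  refine ⟨N, by exact_mod_cast hN.trans_le' zero_le, fun a ha => ?_⟩
  rw [eLpNorm_weightedVolume hp, ENNReal.ofReal_natCast]
  refine le_trans ?_ hN.le
  gcongr
  refine ha.lintegral_weighted_le hn hp hps fun x₀ r hr => ?_
  simpa [finrank_euclideanSpace_fin, div_inv_eq_mul] using hweight x₀ r hr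

theorem eLpNorm_le_of_isBLDecomp {n : ℕ} {p : ℝ} {s : ℝ≥0∞} {α : ℝ} (hp : 0 < p) {C : ℝ}
    (hC : 0 ≤ C) (hblock : ∀ a : Rn n → ℝ, IsBlock n p s α a →
      eLpNorm a (ENNReal.ofReal p) (weightedVolume n α) ≤ ENNReal.ofReal C)
    {f : Rn n → ℝ} {l : ℕ → ℝ} {a : ℕ → Rn n → ℝ} (hd : IsBLDecomp n p s α f l a) :
    eLpNorm f (ENNReal.ofReal p) (weightedVolume n α)
      ≤ ENNReal.ofReal (C * (∑' k, |l k| ^ min p 1) ^ (min p 1)⁻¹) := by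
  obtain ⟨ha, hsum, hf⟩ := hd
  set r := min p 1
  have hr : 0 < r := lt_min hp one_pos
  have hpow : eLpNorm f (ENNReal.ofReal p) (weightedVolume n α) ^ r
      ≤ ENNReal.ofReal (C ^ r * ∑' k, |l k| ^ r) := calc
    _ ≤ ∑' k, eLpNorm (l k • a k) (ENNReal.ofReal p) (weightedVolume n α) ^ r :=
        eLpNorm_rpow_min_one_le_tsum_of_hasSum hp
          (fun k => ((ha k).1.const_smul (l k)).aestronglyMeasurable)
          ((withDensity_absolutelyContinuous _ _).ae_le hf)
    _ ≤ ∑' k, ENNReal.ofReal (C ^ r * |l k| ^ r) := by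
        refine ENNReal.tsum_le_tsum fun k => ?_
        rw [eLpNorm_const_smul, Real.enorm_eq_ofReal_abs, ← Real.mul_rpow hC (abs_nonneg _),
          ← ENNReal.ofReal_rpow_of_nonneg (by positivity) hr.le, mul_comm C,
          ENNReal.ofReal_mul (abs_nonneg _)]
        gcongr
        exact hblock _ (ha k)
    _ = ENNReal.ofReal (C ^ r * ∑' k, |l k| ^ r) := by
        rw [← ENNReal.ofReal_tsum_of_nonneg (fun k => by positivity) (hsum.mul_left _),
          tsum_mul_left]
  calc eLpNorm f (ENNReal.ofReal p) (weightedVolume n α)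
      = (eLpNorm f (ENNReal.ofReal p) (weightedVolume n α) ^ r) ^ r⁻¹ :=
        (ENNReal.rpow_rpow_inv hr.ne' _).symm
    _ ≤ ENNReal.ofReal (C ^ r * ∑' k, |l k| ^ r) ^ r⁻¹ := by gcongr
    _ = _ := by
        rw [ENNReal.ofReal_rpow_of_nonneg (by positivity) (by positivity),
          Real.mul_rpow (by positivity) (by positivity), Real.rpow_rpow_inv hC hr.ne']

theorem le_ofReal_mul_sInf {J : ℝ≥0∞} {C : ℝ} (hC : 0 < C) {S : Set ℝ} (hS : S.Nonempty)
    (hS₀ : ∀ c ∈ S, 0 ≤ c) (h : ∀ c ∈ S, J ≤ ENNReal.ofReal (C * c)) :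
    J ≤ ENNReal.ofReal (C * sInf S) := by
  obtain ⟨c₀, hc₀⟩ := hS
  rw [← ENNReal.ofReal_toReal (ne_top_of_le_ne_top ENNReal.ofReal_ne_top (h c₀ hc₀))]
  refine ENNReal.ofReal_le_ofReal ((div_le_iff₀' hC).1 (le_csInf ⟨c₀, hc₀⟩ fun c hc => ?_))
  exact (div_le_iff₀' hC).2 (ENNReal.toReal_le_of_le_ofReal (mul_nonneg hC.le (hS₀ c hc)) (h c hc))

theorem BL_subset_weighted_Lp_general (n : ℕ) (p : ℝ) (s : ℝ≥0∞) (α : ℝ)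
    (hp : 0 < p) (hps : ENNReal.ofReal p < s)
    (hα1 : -(n : ℝ) * (1 - p * s.toReal⁻¹) < α) (hα2 : α ≤ 0) :
    ∃ C > (0 : ℝ), ∀ f : Rn n → ℝ, MemBL n p s α f →
      (∫⁻ x, (‖f x‖₊ : ℝ≥0∞) ^ p * ENNReal.ofReal (‖x‖ ^ α) ∂volume) < ∞ ∧
      (∫⁻ x, (‖f x‖₊ : ℝ≥0∞) ^ p * ENNReal.ofReal (‖x‖ ^ α) ∂volume) ^ (1 / p)
        ≤ ENNReal.ofReal (C * BLnorm n p s α f) := by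
  obtain ⟨C, hC, hblock⟩ := exists_eLpNorm_weightedVolume_le_of_isBlock hp hps hα1 hα2
  refine ⟨C, hC, fun f ⟨l, a, hd⟩ => ?_⟩
  have hf : eLpNorm f (ENNReal.ofReal p) (weightedVolume n α)
      ≤ ENNReal.ofReal (C * BLnorm n p s α f) :=
    le_ofReal_mul_sInf hC ⟨_, l, a, hd, rfl⟩ (by rintro _ ⟨l, a, -, rfl⟩; positivity)
      (by rintro _ ⟨l, a, hd, rfl⟩; exact eLpNorm_le_of_isBLDecomp hp hC.le hblock hd)
  rw [eLpNorm_weightedVolume hp] at hf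
  exact ⟨(ENNReal.rpow_lt_top_iff_of_pos (by positivity)).1 (hf.trans_lt ENNReal.ofReal_lt_top), hf⟩

/-- for `0 < p < s ≤ ∞`, `-n(1-p/s) < α ≤ 0`, every `f ∈ BL^{p,s}_{|x|^α}`
belongs to `L^p(|x|^α dx)` with `‖f‖_{L^p_{|x|^α}} ≤ C ‖f‖_{BL^{p,s}_{|x|^α}}`. -/
theorem BL_subset_weighted_Lp (n : ℕ) (hn : 0 < n) (p : ℝ) (s : ℝ≥0∞) (α : ℝ)
    (hp : 0 < p) (hps : ENNReal.ofReal p < s)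
    (hα1 : -(n : ℝ) * (1 - p * s.toReal⁻¹) < α) (hα2 : α ≤ 0) :
    ∃ C > (0 : ℝ), ∀ f : Rn n → ℝ, MemBL n p s α f →
      (∫⁻ x, (‖f x‖₊ : ℝ≥0∞) ^ p * ENNReal.ofReal (‖x‖ ^ α) ∂volume) < ∞ ∧
      (∫⁻ x, (‖f x‖₊ : ℝ≥0∞) ^ p * ENNReal.ofReal (‖x‖ ^ α) ∂volume) ^ (1 / p)
        ≤ ENNReal.ofReal (C * BLnorm n p s α f) :=
  BL_subset_weighted_Lp_general n p s α hp hps hα1 hα2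
end
end

section
/- Let 0 < p ≤ s ≤ ∞ and -n < α ≤ n(p/s - 1). Then L^s(ℝⁿ) ⊆ BL^{p,s}_{|x|^α}(ℝⁿ), with ‖f‖_{BL^{p,s}_{|x|^α}} ≤ C ‖f‖_{L^s}. -/
/-!
Cut `f ∈ L^s` along the annuli `A_j = B(0, r_j) \ B(0, r_{j-1})`, with radii `r_j ≥ 1` so large
that `‖f 1_{B(0, r_{j-1})ᶜ}‖_s ≤ 2^{-j} ‖f‖_s`; this is possible because `s < ∞`, which the bounds
on `α` force. Since `e = -α/(pn) - 1/p + 1/s ≥ 0`, a block on a ball of radius `≥ 1` may have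
`L^s` norm `|B(0,1)|^e`, so `f 1_{A_j}` is `λ_j` times a block with
`λ_j = ‖f 1_{A_j}‖_s / |B(0,1)|^e ≤ 2^{1-j} ‖f‖_s / |B(0,1)|^e`. The coefficients decay
geometrically, hence `(Σ λ_j^{min(p,1)})^{1/min(p,1)} ≲ ‖f‖_s`.
-/

open MeasureTheory Metric ENNReal Filter
open scoped ENNReal NNReal

noncomputable section

open scoped Topology Function

section Tails

variable {X E : Type*} [MeasurableSpace X] [NormedAddCommGroup E] {μ : Measure X}
  {p : ℝ≥0∞} {f : X → E}

theorem tendsto_eLpNorm_indicator_of_antitone (hf : MemLp f p μ) (hp0 : p ≠ 0) (hp : p ≠ ⊤)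
    {S : ℕ → Set X} (hS : ∀ m, MeasurableSet (S m)) (hanti : Antitone S)
    (hempty : ⋂ m, S m = ∅) :
    Tendsto (fun m => eLpNorm ((S m).indicator f) p μ) atTop (𝓝 0) := by
  -- `‖1_S f‖_p ^ p` is the `ν`-measure of `S`, so continuity from above applies.
  set ν := μ.withDensity fun x => ‖f x‖ₑ ^ p.toReal
  have hnorm : ∀ m, eLpNorm ((S m).indicator f) p μ = ν (S m) ^ (1 / p.toReal) := fun m => by
    rw [eLpNorm_indicator_eq_eLpNorm_restrict (hS m),
      eLpNorm_eq_lintegral_rpow_enorm_toReal hp0 hp, withDensity_apply _ (hS m)]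
  have hν : Tendsto (ν ∘ S) atTop (𝓝 0) := by
    have hfin : ν (S 0) ≠ ⊤ := by
      refine ne_top_of_le_ne_top ?_ (measure_mono (Set.subset_univ _))
      rw [withDensity_apply _ MeasurableSet.univ, Measure.restrict_univ]
      exact (lintegral_rpow_enorm_lt_top_of_eLpNorm_lt_top hp0 hp hf.eLpNorm_lt_top).ne
    simpa [hempty] using
      tendsto_measure_iInter_atTop (fun m => (hS m).nullMeasurableSet) hanti ⟨0, hfin⟩
  have hpos : 0 < 1 / p.toReal := one_div_pos.2 (ENNReal.toReal_pos hp0 hp)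
  have hlim := ((ENNReal.continuous_rpow_const (y := 1 / p.toReal)).tendsto 0).comp hν
  rw [ENNReal.zero_rpow_of_pos hpos] at hlim
  exact hlim.congr fun m => (hnorm m).symm

variable [PseudoMetricSpace X] [OpensMeasurableSpace X]

theorem eventually_eLpNorm_indicator_compl_closedBall_le (hf : MemLp f p μ) (hp0 : p ≠ 0)
    (hp : p ≠ ⊤) (x₀ : X) {c : ℝ≥0∞} (hc : c ≠ 0) :
    ∀ᶠ m : ℕ in atTop,
      eLpNorm ((closedBall x₀ m)ᶜ.indicator f) p μ ≤ c * eLpNorm f p μ := by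
  rcases eq_or_ne (eLpNorm f p μ) 0 with h0 | h0
  · exact Eventually.of_forall fun m => (eLpNorm_indicator_le f).trans (by simp [h0])
  have hempty : ⋂ m : ℕ, (closedBall x₀ m)ᶜ = ∅ := by
    rw [← Set.compl_iUnion, iUnion_closedBall_nat, Set.compl_univ]
  refine (tendsto_eLpNorm_indicator_of_antitone hf hp0 hp
    (fun m => measurableSet_closedBall.compl) ?_ hempty).eventually
    (eventually_le_nhds (ENNReal.mul_pos hc h0))
  exact fun i j hij =>
    Set.compl_subset_compl.2 (closedBall_subset_closedBall (by exact_mod_cast hij))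

theorem exists_radii_eLpNorm_annulus_le (hf : MemLp f p μ) (hp0 : p ≠ 0) (hp : p ≠ ⊤) (x₀ : X) :
    ∃ r : ℕ → ℝ, (∀ j, 1 ≤ r j) ∧ ⋃ j, closedBall x₀ (r j) = Set.univ ∧
      ∀ j, eLpNorm ((disjointed (fun i => closedBall x₀ (r i)) j).indicator f) p μ
        ≤ 2 * 2⁻¹ ^ j * eLpNorm f p μ := by
  obtain ⟨φ, hφ, hφtail⟩ := extraction_forall_of_eventually fun j =>
    eventually_eLpNorm_indicator_compl_closedBall_le hf hp0 hp x₀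
      (pow_ne_zero j (by norm_num : (2⁻¹ : ℝ≥0∞) ≠ 0))
  have hmono : Monotone fun i => closedBall x₀ ((φ i : ℝ) + 1) := fun i j hij =>
    closedBall_subset_closedBall (by gcongr; exact hφ.monotone hij)
  refine ⟨fun j => φ j + 1, fun j => by simp, ?_, ?_⟩
  · refine Set.eq_univ_of_forall fun x => Set.mem_iUnion.2 ?_
    obtain ⟨m, hm⟩ := exists_nat_ge (dist x x₀)
    refine ⟨m, mem_closedBall.2 (hm.trans ?_)⟩
    have : (m : ℝ) ≤ φ m := by exact_mod_cast hφ.id_le m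
    linarith
  rintro (_ | j)
  · rw [disjointed_zero, pow_zero, mul_one]
    exact (eLpNorm_indicator_le f).trans (le_mul_of_one_le_left' one_le_two)
  · have hsub : disjointed (fun i => closedBall x₀ ((φ i : ℝ) + 1)) (j + 1)
        ⊆ (closedBall x₀ (φ j))ᶜ := by
      rw [hmono.disjointed_add_one]
      exact fun x hx hxj => hx.2 (closedBall_subset_closedBall (by linarith) hxj)
    calc _ ≤ eLpNorm ((closedBall x₀ (φ j))ᶜ.indicator f) p μ :=
          eLpNorm_mono fun x => norm_indicator_le_of_subset hsub f x
      _ ≤ 2⁻¹ ^ j * eLpNorm f p μ := hφtail j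
      _ = 2 * 2⁻¹ ^ (j + 1) * eLpNorm f p μ := by
          rw [pow_succ, mul_comm _ 2⁻¹, ← mul_assoc 2, ENNReal.mul_inv_cancel two_ne_zero
            ENNReal.ofNat_ne_top, one_mul]

end Tails

theorem hasSum_indicator_of_pairwise_disjoint {ι X M : Type*} [AddCommMonoid M]
    [TopologicalSpace M] {A : ι → Set X} (hA : Pairwise (Disjoint on A)) (f : X → M) (x : X) :
    HasSum (fun j => (A j).indicator f x) ((⋃ j, A j).indicator f x) := by
  by_cases hx : x ∈ ⋃ j, A j
  · obtain ⟨j, hj⟩ := Set.mem_iUnion.1 hx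
    rw [Set.indicator_of_mem hx, ← Set.indicator_of_mem hj f]
    exact hasSum_single j fun i hij =>
      Set.indicator_of_notMem (Set.disjoint_left.1 (hA hij.symm) hj) f
  · rw [Set.indicator_of_notMem hx]
    refine hasSum_zero.congr_fun fun j => ?_
    exact Set.indicator_of_notMem (fun hj => hx (Set.mem_iUnion.2 ⟨j, hj⟩)) f

section Geometric

variable {l : ℕ → ℝ} {c t : ℝ}

theorem abs_rpow_le_geometric (ht : 0 ≤ t) (hl : ∀ j, |l j| ≤ c * 2⁻¹ ^ j) (j : ℕ) :
    |l j| ^ t ≤ c ^ t * ((2⁻¹ : ℝ) ^ t) ^ j := by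
  have hc : 0 ≤ c := by simpa using (abs_nonneg _).trans (hl 0)
  calc |l j| ^ t ≤ (c * 2⁻¹ ^ j) ^ t := Real.rpow_le_rpow (abs_nonneg _) (hl j) ht
    _ = c ^ t * ((2⁻¹ : ℝ) ^ t) ^ j := by
      rw [Real.mul_rpow hc (by positivity), Real.rpow_pow_comm (by norm_num)]

theorem summable_abs_rpow_of_abs_le_geometric (ht : 0 < t) (hl : ∀ j, |l j| ≤ c * 2⁻¹ ^ j) :
    Summable fun j => |l j| ^ t :=
  .of_nonneg_of_le (fun _ => by positivity) (abs_rpow_le_geometric ht.le hl)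
    ((summable_geometric_of_lt_one (by positivity)
      (Real.rpow_lt_one (by norm_num) (by norm_num) ht)).mul_left _)

theorem tsum_abs_rpow_rpow_inv_le_of_abs_le_geometric (ht : 0 < t)
    (hl : ∀ j, |l j| ≤ c * 2⁻¹ ^ j) :
    (∑' j, |l j| ^ t) ^ t⁻¹ ≤ c * ((1 - 2⁻¹ ^ t)⁻¹) ^ t⁻¹ := by
  have hc : 0 ≤ c := by simpa using (abs_nonneg _).trans (hl 0)
  have hq : (2⁻¹ : ℝ) ^ t < 1 := Real.rpow_lt_one (by norm_num) (by norm_num) ht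
  have hsum : ∑' j, |l j| ^ t ≤ c ^ t * (1 - 2⁻¹ ^ t)⁻¹ := by
    rw [← tsum_geometric_of_lt_one (by positivity) hq, ← tsum_mul_left]
    exact (summable_abs_rpow_of_abs_le_geometric ht hl).tsum_le_tsum
      (abs_rpow_le_geometric ht.le hl)
      ((summable_geometric_of_lt_one (by positivity) hq).mul_left _)
  calc (∑' j, |l j| ^ t) ^ t⁻¹ ≤ (c ^ t * (1 - 2⁻¹ ^ t)⁻¹) ^ t⁻¹ :=
        Real.rpow_le_rpow (tsum_nonneg fun _ => by positivity) hsum (by positivity)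
    _ = c * ((1 - 2⁻¹ ^ t)⁻¹) ^ t⁻¹ := by
      rw [Real.mul_rpow (by positivity) (inv_nonneg.2 (sub_pos.2 hq).le),
        Real.rpow_rpow_inv hc ht.ne']

end Geometric

theorem div_mul_div_smul_ae_eq {X : Type*} [MeasurableSpace X] {μ : Measure X} {p : ℝ≥0∞}
    {h : X → ℝ} (hh : AEStronglyMeasurable h μ) (hp0 : p ≠ 0) (hfin : eLpNorm h p μ ≠ ⊤)
    {c : ℝ} (hc : c ≠ 0) :
    (fun x => (eLpNorm h p μ).toReal / c * ((c / (eLpNorm h p μ).toReal) • h) x) =ᵐ[μ] h := by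
  rcases eq_or_ne (eLpNorm h p μ) 0 with h0 | h0
  · filter_upwards [(eLpNorm_eq_zero_iff hh hp0).1 h0] with x hx
    simp [hx]
  · have hΛ : (eLpNorm h p μ).toReal ≠ 0 := ENNReal.toReal_ne_zero.2 ⟨h0, hfin⟩
    refine Eventually.of_forall fun x => ?_
    simp only [Pi.smul_apply, smul_eq_mul]
    field_simp

def blockExponent (n : ℕ) (p : ℝ) (s : ℝ≥0∞) (α : ℝ) : ℝ :=
  -α / (p * n) - 1 / p + s.toReal⁻¹

def unitBallBlockSize (n : ℕ) (p : ℝ) (s : ℝ≥0∞) (α : ℝ) : ℝ :=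
  (volume (closedBall (0 : Rn n) 1)).toReal ^ blockExponent n p s α

section Blocks

variable {n : ℕ} {p : ℝ} {s : ℝ≥0∞} {α : ℝ}

theorem pos_of_alpha_bounds (hα1 : -(n : ℝ) < α) (hα2 : α ≤ n * (p * s.toReal⁻¹ - 1)) :
    0 < (n : ℝ) ∧ 0 < p ∧ 0 < s.toReal := by
  have hprod : 0 < (n : ℝ) * (p * s.toReal⁻¹) := by linarith
  have hn : 0 < (n : ℝ) := (Nat.cast_nonneg n).lt_of_ne (by rintro h0; simp [← h0] at hprod)
  have hps : 0 < p * s.toReal⁻¹ := pos_of_mul_pos_right hprod hn.le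
  have hp : 0 < p := pos_of_mul_pos_left hps (inv_nonneg.2 ENNReal.toReal_nonneg)
  exact ⟨hn, hp, inv_pos.1 (pos_of_mul_pos_right hps hp.le)⟩

theorem blockExponent_nonneg (hα1 : -(n : ℝ) < α) (hα2 : α ≤ n * (p * s.toReal⁻¹ - 1)) :
    0 ≤ blockExponent n p s α := by
  obtain ⟨hn, hp, -⟩ := pos_of_alpha_bounds hα1 hα2
  have h : blockExponent n p s α = (n * (p * s.toReal⁻¹ - 1) - α) / (p * n) := by
    unfold blockExponent
    field_simp
    ring
  rw [h]
  exact div_nonneg (sub_nonneg.2 hα2) (by positivity)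

theorem unitBallBlockSize_pos : 0 < unitBallBlockSize n p s α :=
  Real.rpow_pos_of_pos (ENNReal.toReal_pos (measure_closedBall_pos _ _ one_pos).ne'
    measure_closedBall_lt_top.ne) _

theorem isBlock_div_eLpNorm_smul (he : 0 ≤ blockExponent n p s α) {h : Rn n → ℝ}
    (hh : Measurable h) {x₀ : Rn n} {r : ℝ} (hr : 1 ≤ r)
    (hsupp : ∀ x ∉ closedBall x₀ r, h x = 0) (hfin : eLpNorm h s volume ≠ ⊤) :
    IsBlock n p s α ((unitBallBlockSize n p s α / (eLpNorm h s volume).toReal) • h) := by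
  set m₀ := unitBallBlockSize n p s α
  set Λ := (eLpNorm h s volume).toReal
  have hcoeff : 0 ≤ m₀ / Λ := div_nonneg unitBallBlockSize_pos.le ENNReal.toReal_nonneg
  refine ⟨hh.const_smul _, x₀, r, by linarith, fun x hx => by simp [hsupp x hx], ?_⟩
  have hm₀ : m₀ / Λ * Λ ≤ m₀ := by
    rcases eq_or_ne Λ 0 with h0 | h0
    · simpa [h0] using unitBallBlockSize_pos.le
    · rw [div_mul_cancel₀ _ h0]
  have hball : (volume (closedBall (0 : Rn n) 1)).toReal ≤ (volume (closedBall x₀ r)).toReal := by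
    rw [← Measure.addHaar_closedBall_center volume x₀]
    exact ENNReal.toReal_mono measure_closedBall_lt_top.ne
      (measure_mono (closedBall_subset_closedBall hr))
  calc eLpNorm ((m₀ / Λ) • h) s volume = ENNReal.ofReal (m₀ / Λ * Λ) := by
        rw [eLpNorm_const_smul, Real.enorm_eq_ofReal hcoeff, ENNReal.ofReal_mul hcoeff,
          ENNReal.ofReal_toReal hfin]
    _ ≤ ENNReal.ofReal m₀ := ENNReal.ofReal_le_ofReal hm₀
    _ ≤ _ := ENNReal.ofReal_le_ofReal (Real.rpow_le_rpow ENNReal.toReal_nonneg hball he)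

theorem IsBLDecomp.congr_ae {f g : Rn n → ℝ} {l : ℕ → ℝ} {a : ℕ → Rn n → ℝ}
    (h : IsBLDecomp n p s α g l a) (hfg : f =ᵐ[volume] g) : IsBLDecomp n p s α f l a := by
  refine ⟨h.1, h.2.1, ?_⟩
  filter_upwards [h.2.2, hfg] with x hx hfx
  rwa [hfx]

theorem BLnorm_le_of_isBLDecomp {f : Rn n → ℝ} {l : ℕ → ℝ} {a : ℕ → Rn n → ℝ}
    (h : IsBLDecomp n p s α f l a) :
    BLnorm n p s α f ≤ (∑' k, |l k| ^ min p 1) ^ (min p 1)⁻¹ := by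
  refine csInf_le ⟨0, ?_⟩ ⟨l, a, h, rfl⟩
  rintro _ ⟨l', a', -, rfl⟩
  positivity

theorem exists_isBLDecomp_abs_le_geometric (hp : 0 < p) (hs0 : s ≠ 0) (hs : s ≠ ⊤)
    (he : 0 ≤ blockExponent n p s α) {g : Rn n → ℝ} (hg : Measurable g)
    (hgs : MemLp g s volume) :
    ∃ l a, IsBLDecomp n p s α g l a ∧ ∀ j, |l j| ≤
      2 * (eLpNorm g s volume).toReal / unitBallBlockSize n p s α * 2⁻¹ ^ j := by
  obtain ⟨r, hr1, hcover, hdecay⟩ := exists_radii_eLpNorm_annulus_le hgs hs0 hs (0 : Rn n)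
  set A := disjointed fun i => closedBall (0 : Rn n) (r i)
  set m₀ := unitBallBlockSize n p s α
  set Λ := fun j => (eLpNorm ((A j).indicator g) s volume).toReal
  have hm₀ : 0 < m₀ := unitBallBlockSize_pos
  have hA : ∀ j, MeasurableSet (A j) := MeasurableSet.disjointed fun i => measurableSet_closedBall
  have hfin : ∀ j, eLpNorm ((A j).indicator g) s volume ≠ ⊤ := fun j =>
    ((eLpNorm_indicator_le g).trans_lt hgs.eLpNorm_lt_top).ne
  have hl : ∀ j, |Λ j / m₀| ≤ 2 * (eLpNorm g s volume).toReal / m₀ * 2⁻¹ ^ j := by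
    intro j
    have hΛ : Λ j ≤ 2 * 2⁻¹ ^ j * (eLpNorm g s volume).toReal := by
      simpa using ENNReal.toReal_mono (by finiteness [hgs.eLpNorm_lt_top.ne]) (hdecay j)
    rw [abs_of_nonneg (div_nonneg ENNReal.toReal_nonneg hm₀.le),
      show 2 * (eLpNorm g s volume).toReal / m₀ * 2⁻¹ ^ j
        = 2 * 2⁻¹ ^ j * (eLpNorm g s volume).toReal / m₀ by ring]
    exact div_le_div_of_nonneg_right hΛ hm₀.le
  refine ⟨fun j => Λ j / m₀, fun j => (m₀ / Λ j) • (A j).indicator g,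
    ⟨fun j => ?_, summable_abs_rpow_of_abs_le_geometric (lt_min hp one_pos) hl, ?_⟩, hl⟩
  · exact isBlock_div_eLpNorm_smul he (hg.indicator (hA j)) (hr1 j)
      (fun x hx => Set.indicator_of_notMem (fun hxA => hx (disjointed_subset _ j hxA)) g) (hfin j)
  · filter_upwards [ae_all_iff.2 fun j => div_mul_div_smul_ae_eq
      (hg.indicator (hA j)).aestronglyMeasurable hs0 (hfin j) hm₀.ne']
      with x hx
    have hsum : HasSum (fun j => (A j).indicator g x) ((⋃ j, A j).indicator g x) :=
      hasSum_indicator_of_pairwise_disjoint (disjoint_disjointed _) g x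
    rw [iUnion_disjointed, hcover, Set.indicator_univ] at hsum
    exact hsum.congr_fun fun j => hx j

end Blocks

theorem Ls_subset_BL_general (n : ℕ) (p : ℝ) (s : ℝ≥0∞) (α : ℝ)
    (hα1 : -(n : ℝ) < α) (hα2 : α ≤ (n : ℝ) * (p * s.toReal⁻¹ - 1)) :
    ∃ C > (0 : ℝ), ∀ f : Rn n → ℝ, MemLp f s volume →
      MemBL n p s α f ∧ BLnorm n p s α f ≤ C * (eLpNorm f s volume).toReal := by
  obtain ⟨-, hp, hs⟩ := pos_of_alpha_bounds hα1 hα2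
  obtain ⟨hs0, hsT⟩ := ENNReal.toReal_pos_iff.1 hs
  have ht : 0 < min p 1 := lt_min hp one_pos
  have hq : (2⁻¹ : ℝ) ^ min p 1 < 1 := Real.rpow_lt_one (by norm_num) (by norm_num) ht
  refine ⟨2 / unitBallBlockSize n p s α * ((1 - 2⁻¹ ^ min p 1)⁻¹) ^ (min p 1)⁻¹,
    mul_pos (div_pos two_pos unitBallBlockSize_pos)
      (Real.rpow_pos_of_pos (inv_pos.2 (sub_pos.2 hq)) _), fun f hf => ?_⟩
  obtain ⟨l, a, hdecomp, hl⟩ := exists_isBLDecomp_abs_le_geometric hp hs0.ne' hsT.ne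
    (blockExponent_nonneg hα1 hα2) hf.1.stronglyMeasurable_mk.measurable
    (hf.ae_eq hf.1.ae_eq_mk)
  rw [← eLpNorm_congr_ae hf.1.ae_eq_mk] at hl
  have hdecomp_f := hdecomp.congr_ae hf.1.ae_eq_mk
  refine ⟨⟨l, a, hdecomp_f⟩, (BLnorm_le_of_isBLDecomp hdecomp_f).trans ?_⟩
  calc _ ≤ 2 * (eLpNorm f s volume).toReal / unitBallBlockSize n p s α
        * ((1 - 2⁻¹ ^ min p 1)⁻¹) ^ (min p 1)⁻¹ :=
        tsum_abs_rpow_rpow_inv_le_of_abs_le_geometric ht hl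
    _ = _ := by ring

/-- if `0 < p ≤ s ≤ ∞` and `-n < α ≤ n(p/s-1)`, then
`L^s ⊆ BL^{p,s}_{|x|^α}` with `‖f‖_{BL} ≤ C ‖f‖_{L^s}`. -/
theorem Ls_subset_BL (n : ℕ) (hn : 0 < n) (p : ℝ) (s : ℝ≥0∞) (α : ℝ)
    (hp : 0 < p) (hps : ENNReal.ofReal p ≤ s)
    (hα1 : -(n : ℝ) < α) (hα2 : α ≤ (n : ℝ) * (p * s.toReal⁻¹ - 1)) :
    ∃ C > (0 : ℝ), ∀ f : Rn n → ℝ, MemLp f s volume →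
      MemBL n p s α f ∧ BLnorm n p s α f ≤ C * (eLpNorm f s volume).toReal :=
  Ls_subset_BL_general n p s α hα1 hα2
end
end

section
/- Let 0 < p < ∞, 1 ≤ s < ∞ and -n < α < ∞. Then the Schwartz class S(ℝⁿ) is contained in BL^{p,s}_{|x|^α}(ℝⁿ). -/
/-! A Schwartz function `f` is cut into its restrictions `g k` to the annuli `k ≤ |x| < k + 1`.
The piece `g k` lives in the ball `B_k = B(0, k + 1)` and is bounded by `C (k + 1)^{-m}` for every
`m`. A function bounded by `M` on a ball `B` has `‖·‖_{L^s} ≤ |B|^{1/s} M`, so it is `λ` times a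
block as soon as `|B|^{α/(pn) + 1/p} M ≤ λ`, whatever `s`. With `|B_k| ∝ (k + 1)^n` this allows
`λ_k ∝ (k + 1)^{n(α/(pn) + 1/p) - m}`, and `Σ λ_k^{min(p,1)}` converges once `m` is large. -/

open MeasureTheory Metric ENNReal Filter
open scoped ENNReal NNReal

noncomputable section

theorem eLpNorm_le_measure_rpow_mul_of_norm_le {X F : Type*} [MeasurableSpace X]
    [NormedAddCommGroup F] {μ : Measure X} {p : ℝ≥0∞} {S : Set X} (hS : MeasurableSet S)
    {g : X → F} {M : ℝ} (hsupp : ∀ x ∉ S, g x = 0) (hM : ∀ x, ‖g x‖ ≤ M) :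
    eLpNorm g p μ ≤ μ S ^ p.toReal⁻¹ * ENNReal.ofReal M := by
  have hg : S.indicator g = g :=
    Set.indicator_eq_self.mpr fun x hx => by_contra fun h => hx (hsupp x h)
  rw [← hg, eLpNorm_indicator_eq_eLpNorm_restrict hS, ← Measure.restrict_apply_univ]
  exact eLpNorm_le_of_ae_bound (ae_of_all _ hM)

section Blocks

variable {n : ℕ} {p : ℝ} {s : ℝ≥0∞} {α : ℝ}

theorem isBlock_inv_smul {g : Rn n → ℝ} {x₀ : Rn n} {r M l : ℝ} (hg : Measurable g)
    (hr : 0 < r) (hsupp : ∀ x ∉ closedBall x₀ r, g x = 0) (hM : ∀ x, ‖g x‖ ≤ M) (hl : 0 < l)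
    (hbound : (volume (closedBall x₀ r)).toReal ^ (α / (p * n) + 1 / p) * M ≤ l) :
    IsBlock n p s α (l⁻¹ • g) := by
  refine ⟨hg.const_smul _, x₀, r, hr, fun x hx => by simp [hsupp x hx], ?_⟩
  set V := (volume (closedBall x₀ r)).toReal
  have hV : 0 < V := ENNReal.toReal_pos (measure_closedBall_pos volume x₀ hr).ne'
    measure_closedBall_lt_top.ne
  have hlM : ∀ x, ‖(l⁻¹ • g) x‖ ≤ l⁻¹ * M := fun x => by
    rw [Pi.smul_apply, norm_smul, Real.norm_of_nonneg (inv_nonneg.mpr hl.le)]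
    exact mul_le_mul_of_nonneg_left (hM x) (inv_nonneg.mpr hl.le)
  refine (eLpNorm_le_measure_rpow_mul_of_norm_le (S := closedBall x₀ r) measurableSet_closedBall
    (fun x hx => by simp [hsupp x hx]) hlM).trans ?_
  rw [← ENNReal.ofReal_toReal measure_closedBall_lt_top.ne,
    ENNReal.ofReal_rpow_of_nonneg hV.le (inv_nonneg.mpr ENNReal.toReal_nonneg),
    ← ENNReal.ofReal_mul (by positivity)]
  refine ENNReal.ofReal_le_ofReal ?_
  have hsplit : V ^ s.toReal⁻¹ =
      V ^ (-α / (p * n) - 1 / p + s.toReal⁻¹) * V ^ (α / (p * n) + 1 / p) := by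
    rw [← Real.rpow_add hV]; ring_nf
  calc V ^ s.toReal⁻¹ * (l⁻¹ * M)
      = V ^ (-α / (p * n) - 1 / p + s.toReal⁻¹) * (V ^ (α / (p * n) + 1 / p) * M / l) := by
        rw [hsplit]; ring
    _ ≤ V ^ (-α / (p * n) - 1 / p + s.toReal⁻¹) * 1 := by
        gcongr; exact (div_le_one hl).mpr hbound
    _ = _ := mul_one _

theorem memBL_of_hasSum {f : Rn n → ℝ} {l : ℕ → ℝ} {g : ℕ → Rn n → ℝ} (hl : ∀ k, l k ≠ 0)
    (hblock : ∀ k, IsBlock n p s α ((l k)⁻¹ • g k))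
    (hsum : Summable fun k => |l k| ^ min p 1)
    (hf : ∀ᵐ x ∂volume, HasSum (fun k => g k x) (f x)) : MemBL n p s α f :=
  ⟨l, fun k => (l k)⁻¹ • g k, hblock, hsum, by simpa [mul_inv_cancel_left₀ (hl _)] using hf⟩

end Blocks

section Annuli

variable {E : Type*} [SeminormedAddCommGroup E]

def unitAnnulus (k : ℕ) : Set E := ball 0 (k + 1) \ ball 0 k

theorem mem_unitAnnulus {k : ℕ} {x : E} : x ∈ unitAnnulus k ↔ (k : ℝ) ≤ ‖x‖ ∧ ‖x‖ < k + 1 := by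
  simp [unitAnnulus, and_comm]

theorem measurableSet_unitAnnulus [MeasurableSpace E] [OpensMeasurableSpace E] (k : ℕ) :
    MeasurableSet (unitAnnulus k : Set E) :=
  measurableSet_ball.diff measurableSet_ball

theorem unitAnnulus_subset_closedBall (k : ℕ) : (unitAnnulus k : Set E) ⊆ closedBall 0 (k + 1) :=
  Set.sdiff_subset.trans ball_subset_closedBall

theorem hasSum_indicator_unitAnnulus {M : Type*} [AddCommMonoid M] [TopologicalSpace M]
    (f : E → M) (x : E) : HasSum (fun k => (unitAnnulus k).indicator f x) (f x) := by
  have hx : x ∈ unitAnnulus ⌊‖x‖⌋₊ :=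
    mem_unitAnnulus.mpr ⟨Nat.floor_le (norm_nonneg x), Nat.lt_floor_add_one _⟩
  convert hasSum_single ⌊‖x‖⌋₊ fun k hk => Set.indicator_of_notMem (fun hxk => hk ?_) f
  · exact (Set.indicator_of_mem hx f).symm
  · exact ((Nat.floor_eq_iff (norm_nonneg x)).mpr (mem_unitAnnulus.mp hxk)).symm

theorem norm_indicator_unitAnnulus_le {F : Type*} [SeminormedAddCommGroup F] {f : E → F}
    {C : ℝ} {m : ℕ} (hC : 0 ≤ C) (hf : ∀ x, ‖f x‖ ≤ C / (1 + ‖x‖) ^ m) (k : ℕ) (x : E) :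
    ‖(unitAnnulus k).indicator f x‖ ≤ C / ((k : ℝ) + 1) ^ m := by
  rw [norm_indicator_eq_indicator_norm]
  refine Set.indicator_le' (g := fun _ => C / ((k : ℝ) + 1) ^ m) (fun y hy => (hf y).trans ?_)
    (fun _ _ => by positivity) x
  have hk : (k : ℝ) + 1 ≤ 1 + ‖y‖ := by linarith [(mem_unitAnnulus.mp hy).1]
  gcongr

end Annuli

theorem SchwartzMap.exists_pos_norm_le_div_one_add_pow {E F : Type*} [NormedAddCommGroup E]
    [NormedSpace ℝ E] [NormedAddCommGroup F] [NormedSpace ℝ F] (f : SchwartzMap E F) (m : ℕ) :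
    ∃ C > 0, ∀ x, ‖f x‖ ≤ C / (1 + ‖x‖) ^ m := by
  set C := 2 ^ m * (Finset.Iic (m, 0)).sup (fun m => SchwartzMap.seminorm ℝ m.1 m.2) f
  refine ⟨C + 1, by positivity, fun x => ?_⟩
  have h := f.one_add_le_sup_seminorm_apply (𝕜 := ℝ) (m := (m, 0)) le_rfl le_rfl x
  rw [norm_iteratedFDeriv_zero] at h
  rw [le_div_iff₀' (by positivity)]
  linarith

theorem toReal_volume_closedBall_rpow_mul_div_pow {n : ℕ} (β C : ℝ) (m : ℕ) {r : ℝ}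
    (hr : 0 < r) :
    (volume (closedBall (0 : Rn n) r)).toReal ^ β * (C / r ^ m) =
      (volume (ball (0 : Rn n) 1)).toReal ^ β * C * r ^ (n * β - m) := by
  rw [← measureReal_def, ← measureReal_def, Measure.addHaar_real_closedBall volume 0 hr.le,
    finrank_euclideanSpace_fin, Real.mul_rpow (by positivity) measureReal_nonneg,
    ← Real.rpow_natCast r n, ← Real.rpow_mul hr.le, Real.rpow_sub hr, Real.rpow_natCast]
  ring

theorem summable_abs_mul_nat_add_one_rpow_rpow (A : ℝ) {a q : ℝ} (ha : a * q < -1) :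
    Summable fun k : ℕ => |A * ((k : ℝ) + 1) ^ a| ^ q := by
  have hpow : Summable fun k : ℕ => ((k : ℝ) + 1) ^ (a * q) := by
    simpa using (summable_nat_add_iff 1).mpr (Real.summable_nat_rpow.mpr ha)
  refine (hpow.mul_left (|A| ^ q)).congr fun k => ?_
  rw [abs_mul, Real.mul_rpow (abs_nonneg _) (abs_nonneg _),
    abs_of_pos (by positivity : (0 : ℝ) < ((k : ℝ) + 1) ^ a), ← Real.rpow_mul (by positivity)]

theorem schwartz_subset_BL_general (n : ℕ) (p : ℝ) (s : ℝ≥0∞) (α : ℝ) (hp : 0 < p) :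
    ∀ f : SchwartzMap (Rn n) ℝ, MemBL n p s α (⇑f) := by
  intro f
  set β := α / (p * n) + 1 / p
  have hq : 0 < min p 1 := lt_min hp one_pos
  obtain ⟨m, hm⟩ := exists_nat_gt (n * β + 1 / min p 1)
  have hexp : (n * β - m) * min p 1 < -1 := by
    have := mul_lt_mul_of_pos_right (by linarith : n * β - m < -(1 / min p 1)) hq
    rwa [neg_mul, one_div_mul_cancel hq.ne'] at this
  obtain ⟨C, hC, hfC⟩ := f.exists_pos_norm_le_div_one_add_pow m
  set W := (volume (ball (0 : Rn n) 1)).toReal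
  have hW : 0 < W := ENNReal.toReal_pos (measure_ball_pos volume 0 one_pos).ne'
    measure_ball_lt_top.ne
  refine memBL_of_hasSum (l := fun k => W ^ β * C * ((k : ℝ) + 1) ^ (n * β - m))
    (g := fun k => (unitAnnulus k).indicator f) (fun k => by positivity) (fun k => ?_)
    (summable_abs_mul_nat_add_one_rpow_rpow _ hexp)
    (ae_of_all _ (hasSum_indicator_unitAnnulus f))
  refine isBlock_inv_smul (f.continuous.measurable.indicator (measurableSet_unitAnnulus k))
    (by positivity) (fun x hx => Set.indicator_of_notMem
      (fun h => hx (unitAnnulus_subset_closedBall k h)) f)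
    (norm_indicator_unitAnnulus_le hC.le hfC k) (by positivity) ?_
  rw [toReal_volume_closedBall_rpow_mul_div_pow β C m (by positivity)]

/-- for `0 < p < ∞`, `1 ≤ s < ∞`, `-n < α`, the Schwartz class is
contained in `BL^{p,s}_{|x|^α}`. -/
theorem schwartz_subset_BL (n : ℕ) (hn : 0 < n) (p : ℝ) (s : ℝ≥0∞) (α : ℝ)
    (hp : 0 < p) (hs1 : 1 ≤ s) (hs2 : s ≠ ∞) (hα : -(n : ℝ) < α) :
    ∀ f : SchwartzMap (Rn n) ℝ, MemBL n p s α (⇑f) :=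
  schwartz_subset_BL_general n p s α hp
end
end

section
/- Let 0 < p < ∞ and n(p-1) ≤ α < ∞, and let 0 < q ≤ 1. If f ∈ L^q(ℝⁿ) and f ≠ 0 (as an a.e. class), then the Hardy–Littlewood maximal function Mf is not in L^p(|x|^α dx), i.e. ∫_{ℝⁿ} (Mf(x))^p |x|^α dx = ∞. -/
open MeasureTheory Metric ENNReal Filter
open scoped ENNReal NNReal

noncomputable section

/-- The Hardy–Littlewood maximal function (sup over closed balls containing `x`). -/
def HLmax (n : ℕ) (f : Rn n → ℝ) (x : Rn n) : ℝ≥0∞ :=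
  ⨆ (c : Rn n) (r : ℝ) (_ : 0 < r) (_ : x ∈ closedBall c r),
    (∫⁻ y in closedBall c r, (‖f y‖₊ : ℝ≥0∞) ∂volume) / volume (closedBall c r)

open Set

/-! If `f` is not a.e. zero, some ball `B(0, R)` carries a positive part of `∫ |f|`, and averaging
over `B(0, |x|) ⊇ B(0, R)` gives `Mf(x) ≥ c |x|^{-n}` for `|x| > R`. Since `α ≥ n(p - 1)`, for
`|x| ≥ 1` this yields `(Mf(x))^p |x|^α ≥ c^p |x|^{α - np} ≥ c^p |x|^{-n}`, and `|x|^{-n}` is not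
integrable at infinity: in polar coordinates it becomes `∫_R^∞ dr / r`. -/

theorem lintegral_compl_closedBall_norm_rpow_neg_finrank {E : Type*} [NormedAddCommGroup E]
    [NormedSpace ℝ E] [FiniteDimensional ℝ E] [MeasurableSpace E] [BorelSpace E] [Nontrivial E]
    (μ : Measure E) [μ.IsAddHaarMeasure] {R : ℝ} (hR : 0 < R) :
    ∫⁻ x in (closedBall (0 : E) R)ᶜ, ENNReal.ofReal (‖x‖ ^ (-(Module.finrank ℝ E : ℝ))) ∂μ = ∞ := by
  set g : ℝ → ℝ := (Ioi R).indicator fun y ↦ y ^ (-(Module.finrank ℝ E : ℝ))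
  have hnot : ¬ Integrable (fun x : E ↦ g ‖x‖) μ := by
    rw [integrable_fun_norm_addHaar μ]
    intro h
    have h' : IntegrableOn (fun y : ℝ ↦ y ^ (-1 : ℝ)) (Ioi R) := by
      refine (h.mono_set (Ioi_subset_Ioi hR.le)).congr_fun (fun y (hy : R < y) ↦ ?_)
        measurableSet_Ioi
      have hy0 : 0 < y := hR.trans hy
      simp only [smul_eq_mul, g, indicator_of_mem (show y ∈ Ioi R from hy)]
      rw [← Real.rpow_natCast, Nat.cast_sub Module.finrank_pos, ← Real.rpow_add hy0]
      congr 1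
      ring
    exact lt_irrefl _ ((integrableOn_Ioi_rpow_iff hR).1 h')
  have hmeas : AEStronglyMeasurable (fun x : E ↦ g ‖x‖) μ :=
    (((measurable_id.pow_const _).indicator measurableSet_Ioi).comp
      measurable_norm).aestronglyMeasurable
  have hnonneg : 0 ≤ᵐ[μ] fun x : E ↦ g ‖x‖ :=
    .of_forall fun x ↦ indicator_nonneg (fun y _ ↦ Real.rpow_nonneg (norm_nonneg x) _) _
  have hinf : ∫⁻ x, ENNReal.ofReal (g ‖x‖) ∂μ = ∞ := by
    by_contra h
    exact hnot ⟨hmeas, (hasFiniteIntegral_iff_ofReal hnonneg).2 (lt_top_iff_ne_top.2 h)⟩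
  rw [← hinf, ← lintegral_indicator measurableSet_closedBall.compl]
  congr 1 with x
  by_cases hx : R < ‖x‖ <;> simp [g, hx]

theorem exists_setLIntegral_closedBall_ne_zero {X : Type*} [PseudoMetricSpace X]
    [MeasurableSpace X] {μ : Measure X} {g : X → ℝ≥0∞} (hg : AEMeasurable g μ)
    (hne : ¬ g =ᵐ[μ] 0) (x₀ : X) : ∃ k : ℕ, ∫⁻ y in closedBall x₀ k, g y ∂μ ≠ 0 := by
  by_contra! hzero
  apply hne
  rw [← Measure.restrict_univ (μ := μ), ← iUnion_closedBall_nat x₀, EventuallyEq,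
    ae_restrict_iUnion_iff]
  exact fun k ↦ (lintegral_eq_zero_iff' hg.restrict).1 (hzero k)

theorem setLIntegral_closedBall_div_volume_le_HLmax {n : ℕ} (f : Rn n → ℝ) {x c : Rn n} {r : ℝ}
    (hr : 0 < r) (hx : x ∈ closedBall c r) :
    (∫⁻ y in closedBall c r, (‖f y‖₊ : ℝ≥0∞)) / volume (closedBall c r) ≤ HLmax n f x :=
  le_iSup₂_of_le c r <| le_iSup₂_of_le hr hx le_rfl

theorem exists_mul_norm_rpow_neg_le_HLmax {n : ℕ} {f : Rn n → ℝ}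
    (hf : AEStronglyMeasurable f volume) (hne : ¬ f =ᵐ[volume] 0) :
    ∃ c ≠ 0, ∃ R ≥ 1, ∀ x : Rn n, R < ‖x‖ →
      c * ENNReal.ofReal (‖x‖ ^ (-(n : ℝ))) ≤ HLmax n f x := by
  have hne' : ¬ (fun y ↦ (‖f y‖₊ : ℝ≥0∞)) =ᵐ[volume] 0 := fun h ↦
    hne (h.mono fun y hy ↦ by simpa using hy)
  obtain ⟨k, hk⟩ := exists_setLIntegral_closedBall_ne_zero hf.enorm hne' 0
  set C := volume (ball (0 : Rn n) 1)
  have hC0 : C ≠ 0 := (measure_ball_pos volume 0 one_pos).ne'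
  have hCtop : C ≠ ∞ := measure_ball_lt_top.ne
  refine ⟨(∫⁻ y in closedBall 0 k, (‖f y‖₊ : ℝ≥0∞)) / C, ENNReal.div_ne_zero.2 ⟨hk, hCtop⟩,
    k + 1, by simp, fun x hx ↦ ?_⟩
  have hx0 : 0 < ‖x‖ := lt_of_le_of_lt (by positivity) hx
  have hvol : volume (closedBall (0 : Rn n) ‖x‖) = ENNReal.ofReal (‖x‖ ^ n) * C := by
    rw [Measure.addHaar_closedBall volume 0 hx0.le, finrank_euclideanSpace_fin]
  refine le_trans ?_ (setLIntegral_closedBall_div_volume_le_HLmax f hx0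
    (mem_closedBall_zero_iff.2 le_rfl))
  rw [ENNReal.le_div_iff_mul_le (Or.inl (measure_closedBall_pos _ _ hx0).ne')
    (Or.inl measure_closedBall_lt_top.ne), hvol]
  have hcancel : ENNReal.ofReal (‖x‖ ^ (-(n : ℝ))) * ENNReal.ofReal (‖x‖ ^ n) = 1 := by
    rw [← ENNReal.ofReal_mul (by positivity), Real.rpow_neg hx0.le, Real.rpow_natCast,
      inv_mul_cancel₀ (pow_ne_zero _ hx0.ne'), ENNReal.ofReal_one]
  calc _ = _ / C * C * (ENNReal.ofReal (‖x‖ ^ (-(n : ℝ))) * ENNReal.ofReal (‖x‖ ^ n)) := by ring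
    _ = ∫⁻ y in closedBall 0 k, (‖f y‖₊ : ℝ≥0∞) := by
      rw [ENNReal.div_mul_cancel hC0 hCtop, hcancel, mul_one]
    _ ≤ _ := lintegral_mono_set (closedBall_subset_closedBall (by linarith))

theorem mul_ofReal_rpow_neg_le_rpow_mul_ofReal_rpow {c m : ℝ≥0∞} {t p α d : ℝ} (ht : 1 ≤ t)
    (hp : 0 ≤ p) (hα : d * (p - 1) ≤ α) (hm : c * ENNReal.ofReal (t ^ (-d)) ≤ m) :
    c ^ p * ENNReal.ofReal (t ^ (-d)) ≤ m ^ p * ENNReal.ofReal (t ^ α) := by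
  have ht0 : 0 ≤ t := zero_le_one.trans ht
  calc c ^ p * ENNReal.ofReal (t ^ (-d))
      ≤ c ^ p * ENNReal.ofReal ((t ^ (-d)) ^ p * t ^ α) := by
        rw [← Real.rpow_mul ht0, ← Real.rpow_add (zero_lt_one.trans_le ht)]
        gcongr
        linarith
    _ = (c * ENNReal.ofReal (t ^ (-d))) ^ p * ENNReal.ofReal (t ^ α) := by
        rw [ENNReal.mul_rpow_of_nonneg _ _ hp, ENNReal.ofReal_rpow_of_nonneg (by positivity) hp,
          ENNReal.ofReal_mul (by positivity), mul_assoc]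
    _ ≤ m ^ p * ENNReal.ofReal (t ^ α) := by gcongr

theorem HLmax_not_in_weighted_Lp_general (n : ℕ) (hn : 0 < n) (p α q : ℝ)
    (hp : 0 < p) (hα : (n : ℝ) * (p - 1) ≤ α)
    (f : Rn n → ℝ) (hf : MemLp f (ENNReal.ofReal q) volume)
    (hne : ¬ (f =ᵐ[volume] 0)) :
    ∫⁻ x, HLmax n f x ^ p * ENNReal.ofReal (‖x‖ ^ α) ∂volume = ∞ := by
  obtain ⟨c, hc, R, hR, hMf⟩ := exists_mul_norm_rpow_neg_le_HLmax hf.1 hne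
  have : Nonempty (Fin n) := ⟨⟨0, hn⟩⟩
  have hdecay := lintegral_compl_closedBall_norm_rpow_neg_finrank (volume : Measure (Rn n))
    (zero_lt_one.trans_le hR)
  rw [finrank_euclideanSpace_fin] at hdecay
  refine top_le_iff.1 ?_
  calc ∞ = c ^ p * ∞ := (ENNReal.mul_top (by simp [hc, hp, hp.le])).symm
    _ ≤ ∫⁻ x in (closedBall (0 : Rn n) R)ᶜ, c ^ p * ENNReal.ofReal (‖x‖ ^ (-(n : ℝ))) := by
        rw [← hdecay]; exact lintegral_const_mul_le _ _
    _ ≤ ∫⁻ x in (closedBall (0 : Rn n) R)ᶜ, HLmax n f x ^ p * ENNReal.ofReal (‖x‖ ^ α) :=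
        setLIntegral_mono' measurableSet_closedBall.compl fun x hx ↦
          have hRx : R < ‖x‖ := by simpa using hx
          mul_ofReal_rpow_neg_le_rpow_mul_ofReal_rpow (hR.trans hRx.le) hp.le hα (hMf x hRx)
    _ ≤ _ := setLIntegral_le_lintegral _ _

/-- for `0 < p < ∞`, `n(p-1) ≤ α`, `0 < q ≤ 1`, and `f ∈ L^q` with
`f ≠ 0` a.e., the maximal function `Mf` is never in `L^p(|x|^α dx)`. -/
theorem HLmax_not_in_weighted_Lp (n : ℕ) (hn : 0 < n) (p α q : ℝ)
    (hp : 0 < p) (hα : (n : ℝ) * (p - 1) ≤ α) (hq : 0 < q) (hq1 : q ≤ 1)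
    (f : Rn n → ℝ) (hf : MemLp f (ENNReal.ofReal q) volume)
    (hne : ¬ (f =ᵐ[volume] 0)) :
    ∫⁻ x, HLmax n f x ^ p * ENNReal.ofReal (‖x‖ ^ α) ∂volume = ∞ :=
  HLmax_not_in_weighted_Lp_general n hn p α q hp hα f hf hne
end
end
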